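/- Let G = ([s], E) be a directed graph in which every vertex has positive out-degree and its in-degree equals its out-degree (d_i⁺ = d_i⁻ for all i). Then the largest singular value σ₁ of the equal-neighbor adjacency matrix A of G satisfies σ₁² ≤ d_max⁺/d_min⁺ = 1 + ε, where ε = (d_max⁺ − d_min⁺)/d_min⁺. -/

import Mathlib

open Finset Matrix

/-- The out-degree of vertex `j`: the number of `i` with an edge from `j` to `i`. -/
def outDeg {n : ℕ} (E : Fin n → Fin n → Bool) (j : Fin n) : ℕ :=
  (Finset.univ.filter fun i => E j i = true).card

/-- The in-degree of vertex `j`: the number of `i` with an edge from `i` to `j`. -/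
def inDeg {n : ℕ} (E : Fin n → Fin n → Bool) (j : Fin n) : ℕ :=
  (Finset.univ.filter fun i => E i j = true).card

/-- Minimum out-degree. -/
noncomputable def dminOut {n : ℕ} (E : Fin n → Fin n → Bool) : ℕ := sInf (Set.range (outDeg E))

/-- Maximum out-degree. -/
noncomputable def dmaxOut {n : ℕ} (E : Fin n → Fin n → Bool) : ℕ := sSup (Set.range (outDeg E))

/-- Maximum in-degree. -/
noncomputable def dmaxIn {n : ℕ} (E : Fin n → Fin n → Bool) : ℕ := sSup (Set.range (inDeg E))

/-- The equal-neighbor adjacency matrix: `A i j = 1 / d_j⁺` if there is an edge from `j`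
to `i`, and `0` otherwise. -/
noncomputable def eqNbrMatrix {n : ℕ} (E : Fin n → Fin n → Bool) :
    Matrix (Fin n) (Fin n) ℝ :=
  fun i j => if E j i = true then (outDeg E j : ℝ)⁻¹ else 0

/-- The `k`-th largest value (counted with multiplicity, `k = 0` being the largest) of a
real-valued function on a finite index type; junk value `0` if `k ≥ card ι`. -/
noncomputable def kthLargest {ι : Type*} [Fintype ι] (f : ι → ℝ) (k : ℕ) : ℝ :=
  if k < Fintype.card ι then
    ((Finset.univ.val.map f).sort (· ≤ ·)).getD (Fintype.card ι - 1 - k) 0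
  else 0

/-- The `k`-th largest singular value of a real square matrix (`k = 0` is the largest),
i.e. the `k`-th largest square root of an eigenvalue of `AᴴA`. -/
noncomputable def sval {ι : Type*} [Fintype ι] [DecidableEq ι] (A : Matrix ι ι ℝ) (k : ℕ) : ℝ :=
  kthLargest (fun i => Real.sqrt ((Matrix.isHermitian_conjTranspose_mul_self A).eigenvalues i)) k

/-!
This is the interpolation bound `σ₁² ≤ ‖A‖₁ ‖A‖_∞`: since `|(AᵀA)ᵢⱼ| ≤ ∑ₖ |Aₖᵢ| |Aₖⱼ|`, the
absolute row sums of `AᵀA` are at most (max column sum of `A`) · (max row sum of `A`), and by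
Gershgorin this bounds its largest eigenvalue `σ₁²`. Every column of `A` sums to `1`, while row `i`
sums to `∑_{j → i} 1/d_j⁺ ≤ d_i⁻/d_min⁺ = d_i⁺/d_min⁺ ≤ d_max⁺/d_min⁺` by the balance condition.
-/

theorem Matrix.IsHermitian.eigenvalues_le_of_forall_sum_abs_le {n : Type*} [Fintype n]
    [DecidableEq n] {B : Matrix n n ℝ} (hB : B.IsHermitian) {R : ℝ}
    (hR : ∀ i, ∑ j, |B i j| ≤ R) (i : n) : hB.eigenvalues i ≤ R := by
  have hμ : Module.End.HasEigenvalue (toLin' B) (hB.eigenvalues i) := by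
    rw [Module.End.hasEigenvalue_iff_mem_spectrum, spectrum_toLin']
    exact hB.eigenvalues_mem_spectrum_real i
  obtain ⟨k, hk⟩ := eigenvalue_mem_ball hμ
  rw [Metric.mem_closedBall, Real.dist_eq] at hk
  calc hB.eigenvalues i ≤ |B k k| + ∑ j ∈ univ.erase k, ‖B k j‖ := by
        linarith [abs_le.mp hk, le_abs_self (B k k)]
    _ = ∑ j, |B k j| := add_sum_erase univ (fun j => |B k j|) (mem_univ k)
    _ ≤ R := hR k

theorem Matrix.sum_abs_conjTranspose_mul_self_le {n : Type*} [Fintype n]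
    (A : Matrix n n ℝ) {c r : ℝ} (hcol : ∀ j, ∑ i, |A i j| ≤ c)
    (hrow : ∀ i, ∑ j, |A i j| ≤ r) (i : n) : ∑ j, |(Aᴴ * A) i j| ≤ c * r := by
  have hr : 0 ≤ r := (sum_nonneg fun j _ => abs_nonneg (A i j)).trans (hrow i)
  calc ∑ j, |(Aᴴ * A) i j| = ∑ j, |∑ k, A k i * A k j| := by
        simp [mul_apply]
    _ ≤ ∑ j, ∑ k, |A k i| * |A k j| := by
        gcongr with j
        simpa only [abs_mul] using abs_sum_le_sum_abs (fun k => A k i * A k j) univ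
    _ = ∑ k, |A k i| * ∑ j, |A k j| := by
        rw [sum_comm]
        simp only [mul_sum]
    _ ≤ ∑ k, |A k i| * r := by gcongr with k; exact hrow k
    _ ≤ c * r := by rw [← sum_mul]; gcongr; exact hcol i

theorem exists_kthLargest_zero_eq {ι : Type*} [Fintype ι] [Nonempty ι] (f : ι → ℝ) :
    ∃ i, kthLargest f 0 = f i := by
  have hcard : 0 < Fintype.card ι := Fintype.card_pos
  set l := (univ.val.map f).sort (· ≤ ·)
  have hidx : Fintype.card ι - 1 - 0 < l.length := by
    simp only [l, Multiset.length_sort, Multiset.card_map, card_val, card_univ]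
    omega
  have hmem : l[Fintype.card ι - 1 - 0] ∈ univ.val.map f :=
    (Multiset.mem_sort _).mp (List.getElem_mem hidx)
  obtain ⟨i, -, hi⟩ := Multiset.mem_map.mp hmem
  refine ⟨i, ?_⟩
  rw [kthLargest, if_pos hcard, List.getD_eq_getElem l 0 hidx, hi]

theorem sq_sval_zero_le {ι : Type*} [Fintype ι] [DecidableEq ι] [Nonempty ι]
    (A : Matrix ι ι ℝ) {c r : ℝ} (hcol : ∀ j, ∑ i, |A i j| ≤ c)
    (hrow : ∀ i, ∑ j, |A i j| ≤ r) : sval A 0 ^ 2 ≤ c * r := by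
  obtain ⟨i, hi⟩ := exists_kthLargest_zero_eq
    fun i => Real.sqrt ((isHermitian_conjTranspose_mul_self A).eigenvalues i)
  rw [sval, hi, Real.sq_sqrt (eigenvalues_conjTranspose_mul_self_nonneg A i)]
  exact (isHermitian_conjTranspose_mul_self A).eigenvalues_le_of_forall_sum_abs_le
    (A.sum_abs_conjTranspose_mul_self_le hcol hrow) i

section Digraph

variable {n : ℕ} (E : Fin n → Fin n → Bool)

theorem dminOut_le_outDeg (j : Fin n) : dminOut E ≤ outDeg E j :=
  Nat.sInf_le (Set.mem_range_self j)

theorem outDeg_le_dmaxOut (j : Fin n) : outDeg E j ≤ dmaxOut E :=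
  le_csSup (Set.finite_range _).bddAbove (Set.mem_range_self j)

theorem dminOut_pos [Nonempty (Fin n)] (hdeg : ∀ j, 0 < outDeg E j) : 0 < dminOut E := by
  obtain ⟨j, hj⟩ := Nat.sInf_mem (Set.range_nonempty (outDeg E))
  rw [dminOut, ← hj]
  exact hdeg j

theorem eqNbrMatrix_nonneg (i j : Fin n) : 0 ≤ eqNbrMatrix E i j := by
  unfold eqNbrMatrix
  split <;> positivity

theorem sum_eqNbrMatrix_col {j : Fin n} (hj : 0 < outDeg E j) :
    ∑ i, eqNbrMatrix E i j = 1 := by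
  simp only [eqNbrMatrix]
  rw [← sum_filter, sum_const, nsmul_eq_mul]
  exact mul_inv_cancel₀ (Nat.cast_ne_zero.mpr hj.ne')

theorem sum_eqNbrMatrix_row_le (hpos : 0 < dminOut E) (i : Fin n) :
    ∑ j, eqNbrMatrix E i j ≤ inDeg E i / dminOut E := by
  simp only [eqNbrMatrix]
  rw [← sum_filter, div_eq_mul_inv, inDeg, ← nsmul_eq_mul, ← sum_const]
  gcongr with j
  exact_mod_cast dminOut_le_outDeg E j

end Digraph

/-- For a digraph in which every vertex has positive out-degree and in-degree equal to
out-degree, the largest singular value of the equal-neighbor adjacency matrix satisfies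
`σ₁² ≤ d_max⁺/d_min⁺ = 1 + ε` where `ε = (d_max⁺ − d_min⁺)/d_min⁺`. -/
theorem stmt12 (s : ℕ) (hs : 0 < s) (E : Fin s → Fin s → Bool)
    (hdeg : ∀ j : Fin s, 0 < outDeg E j)
    (hbal : ∀ i : Fin s, inDeg E i = outDeg E i)
    (ε : ℝ) (hε : ε = ((dmaxOut E : ℝ) - (dminOut E : ℝ)) / (dminOut E : ℝ)) :
    sval (eqNbrMatrix E) 0 ^ 2 ≤ (dmaxOut E : ℝ) / (dminOut E : ℝ) ∧
      (dmaxOut E : ℝ) / (dminOut E : ℝ) = 1 + ε := by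
  have : Nonempty (Fin s) := ⟨⟨0, hs⟩⟩
  have hpos := dminOut_pos E hdeg
  have hcol : ∀ j, ∑ i, |eqNbrMatrix E i j| ≤ 1 := fun j => by
    simp only [abs_of_nonneg (eqNbrMatrix_nonneg E _ _), sum_eqNbrMatrix_col E (hdeg j), le_refl]
  have hrow : ∀ i, ∑ j, |eqNbrMatrix E i j| ≤ (dmaxOut E : ℝ) / dminOut E := fun i => by
    simp only [abs_of_nonneg (eqNbrMatrix_nonneg E _ _)]
    calc ∑ j, eqNbrMatrix E i j ≤ inDeg E i / dminOut E := sum_eqNbrMatrix_row_le E hpos i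
      _ ≤ dmaxOut E / dminOut E := by
        rw [hbal i]
        gcongr
        exact_mod_cast outDeg_le_dmaxOut E i
  refine ⟨one_mul ((dmaxOut E : ℝ) / dminOut E) ▸ sq_sval_zero_le _ hcol hrow, ?_⟩
  rw [hε]
  field_simp
  ring
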